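/- arXiv:2411.06859 — 9 statements merged into one kernel-verified Lean document; each statement's English description precedes it below -/
import Mathlib

section
/- For any matrices A, B, C, D in SL(2,F), 2·tr(ABCD) = tr(AC)tr(B)tr(D) − tr(A)tr(B)tr(CD) − tr(B)tr(C)tr(DA) − tr(AC)tr(BD) + tr(AB)tr(CD) + tr(BC)tr(DA) − tr(ACB)tr(D) + tr(A)tr(BCD) + tr(B)tr(CDA) + tr(C)tr(DAB). -/
open Matrix

abbrev SL2 (F : Type*) [Field F] := Matrix.SpecialLinearGroup (Fin 2) F

def tr {F : Type*} [Field F] (A : SL2 F) : F :=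
  Matrix.trace (A : Matrix (Fin 2) (Fin 2) F)

def eigVec {F : Type*} [Field F] (A : SL2 F) (v : Fin 2 → F) : Prop :=
  ∃ c : F, (A : Matrix (Fin 2) (Fin 2) F).mulVec v = c • v

/-- `A` and `B` have a common invariant 1-dimensional subspace of `F²`,
i.e. a common eigenvector. -/
def HasCommonEigenvector {F : Type*} [Field F] (A B : SL2 F) : Prop :=
  ∃ v : Fin 2 → F, v ≠ 0 ∧ eigVec A v ∧ eigVec B v

/-!
Polarizing the Cayley–Hamilton theorem for 2×2 matrices gives
`XY + YX = tr X • Y + tr Y • X - (tr X tr Y - tr XY) • 1`; multiplying by `Z` and taking traces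
expresses `tr XYZ + tr YXZ` through traces of shorter words. The cyclic words `ABCD`, `ACBD`,
`ACDB` are pairwise related by one such adjacent transposition, so the alternating sum of the
three relations isolates `2 tr ABCD`.
-/

namespace Matrix

variable {R : Type*} [CommRing R]

theorem mul_add_mul_fin_two (X Y : Matrix (Fin 2) (Fin 2) R) :
    X * Y + Y * X = X.trace • Y + Y.trace • X - (X.trace * Y.trace - (X * Y).trace) • 1 := by
  ext i j
  fin_cases i <;> fin_cases j <;>
    simp only [Fin.zero_eta, Fin.mk_one, Fin.isValue, add_apply, sub_apply, smul_apply,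
      smul_eq_mul, mul_apply, Fin.sum_univ_two, trace_fin_two, one_apply_eq, ne_eq, zero_ne_one,
      one_ne_zero, not_false_eq_true, one_apply_ne, mul_one, mul_zero] <;> ring

theorem trace_mul_mul_add_trace_mul_mul_fin_two (X Y Z : Matrix (Fin 2) (Fin 2) R) :
    trace (X * Y * Z) + trace (Y * X * Z) =
      X.trace * (Y * Z).trace + Y.trace * (X * Z).trace
        - (X.trace * Y.trace - (X * Y).trace) * Z.trace := by
  rw [← trace_add, ← add_mul, mul_add_mul_fin_two]
  simp only [sub_mul, add_mul, smul_mul_assoc, one_mul, trace_sub, trace_add, trace_smul,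
    smul_eq_mul]

theorem two_mul_trace_mul_mul_mul_fin_two (a b c d : Matrix (Fin 2) (Fin 2) R) :
    2 * trace (a * b * c * d) =
      trace (a * c) * trace b * trace d - trace a * trace b * trace (c * d)
        - trace b * trace c * trace (d * a)
        - trace (a * c) * trace (b * d) + trace (a * b) * trace (c * d)
        + trace (b * c) * trace (d * a)
        - trace (a * c * b) * trace d + trace a * trace (b * c * d)
        + trace b * trace (c * d * a) + trace c * trace (d * a * b) := by
  have swap_bc := trace_mul_mul_add_trace_mul_mul_fin_two b c (d * a)
  have swap_bd := trace_mul_mul_add_trace_mul_mul_fin_two b d (a * c)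
  have swap_ab := trace_mul_mul_add_trace_mul_mul_fin_two a b (c * d)
  have cyc_bcda : trace (b * c * (d * a)) = trace (a * b * c * d) := by
    simpa only [Matrix.mul_assoc] using trace_mul_comm (b * c * d) a
  have cyc_cbda : trace (c * b * (d * a)) = trace (b * d * (a * c)) := by
    simpa only [Matrix.mul_assoc] using trace_mul_comm c (b * d * a)
  have cyc_dbac : trace (d * b * (a * c)) = trace (b * a * (c * d)) := by
    simpa only [Matrix.mul_assoc] using trace_mul_comm d (b * a * c)
  have cyc_bda : trace (b * (d * a)) = trace (d * a * b) := trace_mul_comm _ _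
  have cyc_dac : trace (d * (a * c)) = trace (a * (c * d)) := by
    simpa only [Matrix.mul_assoc] using trace_mul_comm d (a * c)
  have cyc_bac : trace (b * (a * c)) = trace (a * c * b) := trace_mul_comm _ _
  rw [cyc_bcda, cyc_cbda, cyc_bda] at swap_bc
  rw [cyc_dbac, cyc_dac, cyc_bac] at swap_bd
  simp only [Matrix.mul_assoc] at swap_bc swap_bd swap_ab ⊢
  linear_combination swap_bc - swap_bd + swap_ab

end Matrix

theorem two_mul_trace_abcd {F : Type*} [Field F] (A B C D : SL2 F) :
    2 * tr (A * B * C * D) =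
      tr (A * C) * tr B * tr D - tr A * tr B * tr (C * D)
        - tr B * tr C * tr (D * A)
        - tr (A * C) * tr (B * D) + tr (A * B) * tr (C * D)
        + tr (B * C) * tr (D * A)
        - tr (A * C * B) * tr D + tr A * tr (B * C * D)
        + tr B * tr (C * D * A) + tr C * tr (D * A * B) :=
  two_mul_trace_mul_mul_mul_fin_two (A : Matrix (Fin 2) (Fin 2) F) B C D
end

section
/- Two matrices A, B in SL(2,F) over an algebraically closed field F have a common invariant 1-dimensional subspace of F² if and only if tr(ABA⁻¹B⁻¹) = 2. -/
open Matrix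

/-!
Put `N = AB - BA = (ABA⁻¹B⁻¹ - 1)BA`. Since `det (C - 1) = det C - tr C + 1` for `2 × 2`
matrices, `det N = 2 - tr (ABA⁻¹B⁻¹)`, so the claim is that `A` and `B` have a common
eigenvector iff `N` is singular. A common eigenvector lies in `ker N`. Conversely, Cayley–Hamilton
(`X² = (tr X) X - det X`) gives `XN + NX = (tr X) N` for `X = A`, and likewise for `X = B`, so
`ker N` is invariant under both; if `N ≠ 0` it is a line, spanned by a common eigenvector. If
`N = 0` the matrices commute, so `B` preserves `ker (A - a)` for an eigenvalue `a` of `A`; this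
is a line unless `A` is scalar, in which case any eigenvector of `B` will do.
-/

theorem LinearMap.exists_smul_eq_of_apply_eq_zero_of_finrank_eq_two {K V W : Type*} [Field K]
    [AddCommGroup V] [Module K V] [FiniteDimensional K V] [AddCommGroup W] [Module K W]
    (hV : Module.finrank K V = 2) {f : V →ₗ[K] W} (hf : f ≠ 0) {u w : V} (hu : u ≠ 0)
    (hfu : f u = 0) (hfw : f w = 0) : ∃ c : K, c • u = w := by
  have hu' : (⟨u, mem_ker.mpr hfu⟩ : ker f) ≠ 0 := fun h ↦ hu (congrArg Subtype.val h)
  have hker_lt : Module.finrank K (ker f) < 2 :=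
    hV ▸ Submodule.finrank_lt (by rwa [Ne, ker_eq_top])
  have hker_pos : 0 < Module.finrank K (ker f) :=
    Module.finrank_pos_iff_exists_ne_zero.mpr ⟨_, hu'⟩
  have hker : Module.finrank K (ker f) = 1 := by omega
  obtain ⟨c, hc⟩ := (finrank_eq_one_iff_of_nonzero' _ hu').mp hker ⟨w, mem_ker.mpr hfw⟩
  exact ⟨c, congrArg Subtype.val hc⟩

namespace Matrix

section CommRing

variable {R : Type*} [CommRing R]

theorem det_sub_one_fin_two (M : Matrix (Fin 2) (Fin 2) R) :
    (M - 1).det = M.det - M.trace + 1 := by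
  rw [det_fin_two, det_fin_two, trace_fin_two]
  simp only [sub_apply, one_apply_eq, one_apply_ne zero_ne_one, one_apply_ne one_ne_zero]
  ring

theorem SpecialLinearGroup.det_mul_sub_mul_fin_two (A B : SpecialLinearGroup (Fin 2) R) :
    ((A : Matrix (Fin 2) (Fin 2) R) * B - B * A).det =
      2 - (↑(A * B * A⁻¹ * B⁻¹) : Matrix (Fin 2) (Fin 2) R).trace := by
  have h : (A : Matrix (Fin 2) (Fin 2) R) * B - B * A =
      ((↑(A * B * A⁻¹ * B⁻¹) : Matrix (Fin 2) (Fin 2) R) - 1) *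
        (↑(B * A) : Matrix (Fin 2) (Fin 2) R) := by
    rw [sub_mul, one_mul, ← SpecialLinearGroup.coe_mul (A * B * A⁻¹ * B⁻¹),
      show A * B * A⁻¹ * B⁻¹ * (B * A) = A * B by group, SpecialLinearGroup.coe_mul,
      SpecialLinearGroup.coe_mul]
  rw [h, det_mul, SpecialLinearGroup.det_coe, mul_one, det_sub_one_fin_two,
    SpecialLinearGroup.det_coe]
  ring

theorem mul_commutator_add_commutator_mul_fin_two (X Y : Matrix (Fin 2) (Fin 2) R) :
    X * (X * Y - Y * X) + (X * Y - Y * X) * X = X.trace • (X * Y - Y * X) := by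
  ext i j
  fin_cases i <;> fin_cases j <;> simp [mul_apply, Fin.sum_univ_two, trace_fin_two] <;> ring

theorem commutator_mulVec_mulVec_eq_zero_fin_two {X Y : Matrix (Fin 2) (Fin 2) R}
    {v : Fin 2 → R} (hv : (X * Y - Y * X) *ᵥ v = 0) : (X * Y - Y * X) *ᵥ (X *ᵥ v) = 0 := by
  rw [mulVec_mulVec, eq_sub_of_add_eq' (mul_commutator_add_commutator_mul_fin_two X Y),
    sub_mulVec, smul_mulVec, hv, ← mulVec_mulVec, hv, mulVec_zero, smul_zero, sub_zero]

end CommRing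

variable {F : Type*} [Field F]

theorem exists_mulVec_eq_smul_of_mulVec_eq_zero_fin_two {M X : Matrix (Fin 2) (Fin 2) F}
    (hM : M ≠ 0) {u : Fin 2 → F} (hu : u ≠ 0) (hMu : M *ᵥ u = 0)
    (hMXu : M *ᵥ (X *ᵥ u) = 0) : ∃ c : F, X *ᵥ u = c • u := by
  obtain ⟨c, hc⟩ := LinearMap.exists_smul_eq_of_apply_eq_zero_of_finrank_eq_two
    (Module.finrank_fin_fun F) (toLin'.map_ne_zero_iff.mpr hM) hu
    (by rwa [toLin'_apply]) (by rwa [toLin'_apply])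
  exact ⟨c, hc.symm⟩

theorem exists_mulVec_eq_smul [IsAlgClosed F] {n : Type*} [Fintype n] [DecidableEq n]
    [Nonempty n] (X : Matrix n n F) : ∃ v ≠ 0, ∃ c : F, X *ᵥ v = c • v := by
  obtain ⟨c, hc⟩ := Module.End.exists_eigenvalue (toLin' X)
  obtain ⟨v, hv⟩ := hc.exists_hasEigenvector
  exact ⟨v, hv.2, c, by simpa using hv.apply_eq_smul⟩

theorem exists_common_eigenvector_of_commute_fin_two [IsAlgClosed F]
    {X Y : Matrix (Fin 2) (Fin 2) F} (hXY : Commute X Y) :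
    ∃ v ≠ 0, (∃ a : F, X *ᵥ v = a • v) ∧ ∃ b : F, Y *ᵥ v = b • v := by
  obtain ⟨u, hu, a, hXu⟩ := exists_mulVec_eq_smul X
  by_cases hX : X - a • 1 = 0
  · obtain ⟨v, hv, hYv⟩ := exists_mulVec_eq_smul Y
    exact ⟨v, hv, ⟨a, by rw [sub_eq_zero.mp hX, smul_mulVec, one_mulVec]⟩, hYv⟩
  have hMu : (X - a • 1) *ᵥ u = 0 := by
    rw [sub_mulVec, hXu, smul_mulVec, one_mulVec, sub_self]
  have hMY : Commute (X - a • 1) Y := hXY.sub_left ((Commute.one_left Y).smul_left a)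
  have hMYu : (X - a • 1) *ᵥ (Y *ᵥ u) = 0 := by
    rw [mulVec_mulVec, hMY.eq, ← mulVec_mulVec, hMu, mulVec_zero]
  exact ⟨u, hu, ⟨a, hXu⟩, exists_mulVec_eq_smul_of_mulVec_eq_zero_fin_two hX hu hMu hMYu⟩

theorem exists_common_eigenvector_iff_det_commutator_eq_zero_fin_two [IsAlgClosed F]
    {X Y : Matrix (Fin 2) (Fin 2) F} :
    (∃ v ≠ 0, (∃ a : F, X *ᵥ v = a • v) ∧ ∃ b : F, Y *ᵥ v = b • v) ↔
      (X * Y - Y * X).det = 0 := by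
  refine ⟨fun ⟨v, hv, ⟨a, hXv⟩, b, hYv⟩ ↦ exists_mulVec_eq_zero_iff.mp ⟨v, hv, ?_⟩,
    fun h ↦ ?_⟩
  · rw [sub_mulVec, ← mulVec_mulVec, ← mulVec_mulVec, hXv, hYv, mulVec_smul, mulVec_smul, hXv,
      hYv, smul_smul, smul_smul, mul_comm, sub_self]
  by_cases hN : X * Y - Y * X = 0
  · exact exists_common_eigenvector_of_commute_fin_two (sub_eq_zero.mp hN)
  obtain ⟨v, hv, hNv⟩ := exists_mulVec_eq_zero_iff.mpr h
  have hNXv : (X * Y - Y * X) *ᵥ (X *ᵥ v) = 0 := commutator_mulVec_mulVec_eq_zero_fin_two hNv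
  have hNYv : (X * Y - Y * X) *ᵥ (Y *ᵥ v) = 0 := by
    have hNv' : (Y * X - X * Y) *ᵥ v = 0 := by rw [← neg_sub, neg_mulVec, hNv, neg_zero]
    rw [← neg_sub, neg_mulVec, commutator_mulVec_mulVec_eq_zero_fin_two hNv', neg_zero]
  exact ⟨v, hv, exists_mulVec_eq_smul_of_mulVec_eq_zero_fin_two hN hv hNv hNXv,
    exists_mulVec_eq_smul_of_mulVec_eq_zero_fin_two hN hv hNv hNYv⟩

end Matrix

theorem common_eigenvector_iff_trace_commutator_eq_two
    {F : Type*} [Field F] [IsAlgClosed F] (A B : SL2 F) :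
    HasCommonEigenvector A B ↔ tr (A * B * A⁻¹ * B⁻¹) = 2 := by
  calc HasCommonEigenvector A B
      ↔ ((A : Matrix (Fin 2) (Fin 2) F) * B - B * A).det = 0 :=
        exists_common_eigenvector_iff_det_commutator_eq_zero_fin_two
    _ ↔ tr (A * B * A⁻¹ * B⁻¹) = 2 := by
        rw [SpecialLinearGroup.det_mul_sub_mul_fin_two, sub_eq_zero, eq_comm, tr]
end

section
/- Let F be an algebraically closed field, and suppose A, B, C in SL(2,F) have no common invariant 1-dimensional subspace of F², but each pair among {A,B,C} does have a common invariant 1-dimensional subspace. Then tr(A·(BC)·A⁻¹·(BC)⁻¹) ≠ 2, i.e., A and BC have no common invariant 1-dimensional subspace. -/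
/-!
Let `v₁, v₂, v₃` be common eigenvectors of `(A, B)`, `(A, C)`, `(B, C)`. Irreducibility forces
`v₁, v₂` to be independent and the eigenvalues `a, d` of `A` on them to differ (otherwise `A` is
scalar and `v₃` is common to all three). In the basis `(v₁, v₂)` the matrix `A` is `diag(a, d)`, and
then `tr ⁅A, Y⁆ = 2 - (a - d)² Y₀₁ Y₁₀` for every `Y ∈ SL₂`. So `tr ⁅A, BC⁆ = 2` makes `v₁` or `v₂` an
eigenvector of `BC`; as `B` fixes the line of `v₁` and `C` that of `v₂`, that line is then also fixed
by `C = B⁻¹(BC)`, resp. `B = (BC)C⁻¹`, contradicting irreducibility.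
-/

open Matrix

open scoped commutatorElement

section

variable {F : Type*} [Field F]

lemma eigVec.smul {A : SL2 F} {v : Fin 2 → F} (h : eigVec A v) (k : F) : eigVec A (k • v) := by
  obtain ⟨c, hc⟩ := h
  exact ⟨c, by rw [mulVec_smul, hc, smul_comm]⟩

lemma eigVec.mul {A B : SL2 F} {v : Fin 2 → F} (hA : eigVec A v) (hB : eigVec B v) :
    eigVec (A * B) v := by
  obtain ⟨a, ha⟩ := hA
  obtain ⟨b, hb⟩ := hB
  exact ⟨a * b, by
    rw [Matrix.SpecialLinearGroup.coe_mul, ← mulVec_mulVec, hb, mulVec_smul, ha, smul_smul,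
      mul_comm]⟩

lemma eigVec.inv {A : SL2 F} {v : Fin 2 → F} (h : eigVec A v) : eigVec A⁻¹ v := by
  obtain ⟨c, hc⟩ := h
  have hv : c • A⁻¹.1 *ᵥ v = v := by
    rw [← mulVec_smul, ← hc, mulVec_mulVec, ← Matrix.SpecialLinearGroup.coe_mul, inv_mul_cancel,
      Matrix.SpecialLinearGroup.coe_one, one_mulVec]
  by_cases hc0 : c = 0
  · rw [hc0, zero_smul] at hv
    exact ⟨0, by rw [← hv, mulVec_zero, smul_zero]⟩
  · exact ⟨c⁻¹, by rw [eq_inv_smul_iff₀ hc0, hv]⟩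

lemma mulVec_eq_smul_of_linearIndependent {M : Matrix (Fin 2) (Fin 2) F} {v w : Fin 2 → F}
    {c : F} (hind : LinearIndependent F ![v, w]) (hv : M *ᵥ v = c • v) (hw : M *ᵥ w = c • w)
    (u : Fin 2 → F) : M *ᵥ u = c • u := by
  have hspan := hind.span_eq_top_of_card_eq_finrank (by simp)
  rw [range_cons_cons_empty] at hspan
  obtain ⟨s, t, rfl⟩ := Submodule.mem_span_pair.mp (hspan ▸ Submodule.mem_top (x := u))
  rw [mulVec_add, mulVec_smul, mulVec_smul, hv, hw, smul_add, smul_comm s, smul_comm t]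

lemma exists_SL2_mulVec_single {v w : Fin 2 → F} (hind : LinearIndependent F ![v, w]) :
    ∃ (P : SL2 F) (k : F), k ≠ 0 ∧ P.1 *ᵥ Pi.single 0 1 = v ∧ P.1 *ᵥ Pi.single 1 1 = k • w := by
  have hδ : (of ![v, w]).det ≠ 0 :=
    ((isUnit_iff_isUnit_det _).mp (linearIndependent_rows_iff_isUnit.mp hind)).ne_zero
  refine ⟨⟨(of ![v, (of ![v, w]).det⁻¹ • w])ᵀ, ?_⟩, _, inv_ne_zero hδ, ?_, ?_⟩
  · simp only [det_fin_two, det_transpose, of_apply, cons_val_zero, cons_val_one, Pi.smul_apply,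
      smul_eq_mul] at hδ ⊢
    field_simp
  all_goals
    ext i
    fin_cases i <;> simp

lemma mulVec_conj (P X : SL2 F) (u : Fin 2 → F) :
    P.1 *ᵥ ((P⁻¹ * X * P).1 *ᵥ u) = X.1 *ᵥ (P.1 *ᵥ u) := by
  rw [mulVec_mulVec, ← Matrix.SpecialLinearGroup.coe_mul, show P * (P⁻¹ * X * P) = X * P by group,
    Matrix.SpecialLinearGroup.coe_mul, mulVec_mulVec]

lemma conj_mulVec_eq_smul_iff {P X : SL2 F} {u : Fin 2 → F} {c : F} :
    (P⁻¹ * X * P).1 *ᵥ u = c • u ↔ X.1 *ᵥ (P.1 *ᵥ u) = c • (P.1 *ᵥ u) := by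
  rw [← mulVec_conj, ← mulVec_smul]
  exact (mulVec_injective_of_det_ne_zero (by rw [P.prop]; exact one_ne_zero)).eq_iff.symm

lemma eigVec_of_eigVec_conj {P X : SL2 F} {u : Fin 2 → F} (h : eigVec (P⁻¹ * X * P) u) :
    eigVec X (P.1 *ᵥ u) :=
  h.imp fun _ => conj_mulVec_eq_smul_iff.mp

lemma coe_conj_eq_diagonal {P A : SL2 F} {a d : F}
    (h₀ : A.1 *ᵥ (P.1 *ᵥ Pi.single 0 1) = a • (P.1 *ᵥ Pi.single 0 1))
    (h₁ : A.1 *ᵥ (P.1 *ᵥ Pi.single 1 1) = d • (P.1 *ᵥ Pi.single 1 1)) :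
    (P⁻¹ * A * P).1 = diagonal ![a, d] := by
  have h₀' := conj_mulVec_eq_smul_iff.mpr h₀
  have h₁' := conj_mulVec_eq_smul_iff.mpr h₁
  rw [mulVec_single_one] at h₀' h₁'
  ext i j
  fin_cases j
  · have := congrFun h₀' i
    fin_cases i <;> simpa using this
  · have := congrFun h₁' i
    fin_cases i <;> simpa using this

lemma tr_conj (P X : SL2 F) : tr (P⁻¹ * X * P) = tr X := by
  simp only [tr, Matrix.SpecialLinearGroup.coe_mul]
  rw [trace_mul_comm, ← Matrix.mul_assoc, ← Matrix.SpecialLinearGroup.coe_mul, mul_inv_cancel,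
    Matrix.SpecialLinearGroup.coe_one, Matrix.one_mul]

lemma tr_commutatorElement_of_coe_eq_diagonal {D Z : SL2 F} {a d : F}
    (hD : D.1 = diagonal ![a, d]) : tr ⁅D, Z⁆ = 2 - (a - d) ^ 2 * Z 0 1 * Z 1 0 := by
  have had := D.prop
  have hZ := Z.prop
  rw [hD, diagonal_vec2, det_fin_two_of, mul_zero, sub_zero] at had
  rw [det_fin_two] at hZ
  simp only [commutatorElement_def, tr, Matrix.SpecialLinearGroup.coe_mul,
    Matrix.SpecialLinearGroup.coe_inv, hD, diagonal_vec2, adjugate_fin_two_of]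
  conv_lhs => rw [eta_fin_two Z.1, adjugate_fin_two_of]
  simp only [mul_fin_two, trace_fin_two_of]
  linear_combination 2 * (Z 0 0 * Z 1 1 - Z 0 1 * Z 1 0) * had + 2 * hZ

lemma eigVec_single_of_apply_eq_zero (Z : SL2 F) {i j : Fin 2} (hij : i ≠ j) (h : Z i j = 0) :
    eigVec Z (Pi.single j 1) := by
  refine ⟨Z j j, ?_⟩
  rw [mulVec_single_one]
  ext l
  fin_cases i <;> fin_cases j <;> fin_cases l <;> simp_all

lemma eigVec_or_eigVec_of_tr_commutatorElement_eq_two {A Y : SL2 F} {v w : Fin 2 → F} {a d : F}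
    (hind : LinearIndependent F ![v, w]) (hv : A.1 *ᵥ v = a • v) (hw : A.1 *ᵥ w = d • w)
    (had : a ≠ d) (htr : tr ⁅A, Y⁆ = 2) :
    eigVec Y v ∨ eigVec Y w := by
  obtain ⟨P, k, hk, hP₀, hP₁⟩ := exists_SL2_mulVec_single hind
  have hD : (P⁻¹ * A * P).1 = diagonal ![a, d] :=
    coe_conj_eq_diagonal (by rw [hP₀, hv]) (by rw [hP₁, mulVec_smul, hw, smul_comm])
  have htr' : tr ⁅P⁻¹ * A * P, P⁻¹ * Y * P⁆ = 2 := by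
    rw [show ⁅P⁻¹ * A * P, P⁻¹ * Y * P⁆ = P⁻¹ * ⁅A, Y⁆ * P by
      simp only [commutatorElement_def]; group, tr_conj, htr]
  rw [tr_commutatorElement_of_coe_eq_diagonal hD, sub_eq_self] at htr'
  have hZ : (P⁻¹ * Y * P) 0 1 = 0 ∨ (P⁻¹ * Y * P) 1 0 = 0 := by
    simpa [sub_eq_zero, had] using htr'
  rcases hZ with h₀₁ | h₁₀
  · right
    have hY := eigVec_of_eigVec_conj (eigVec_single_of_apply_eq_zero _ zero_ne_one h₀₁)
    rw [hP₁] at hY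
    simpa only [inv_smul_smul₀ hk] using hY.smul k⁻¹
  · left
    simpa only [hP₀] using eigVec_of_eigVec_conj (eigVec_single_of_apply_eq_zero _ one_ne_zero h₁₀)

end

theorem pairwise_reducible_irreducible_triple_general
    {F : Type*} [Field F] (A B C : SL2 F)
    (hirr : ¬ ∃ v : Fin 2 → F, v ≠ 0 ∧ eigVec A v ∧ eigVec B v ∧ eigVec C v)
    (hAB : HasCommonEigenvector A B)
    (hAC : HasCommonEigenvector A C)
    (hBC : HasCommonEigenvector B C) :
    tr (A * (B * C) * A⁻¹ * (B * C)⁻¹) ≠ 2 := by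
  obtain ⟨v₁, hv₁, ⟨a, hAv₁⟩, hBv₁⟩ := hAB
  obtain ⟨v₂, hv₂, ⟨d, hAv₂⟩, hCv₂⟩ := hAC
  obtain ⟨v₃, hv₃, hBv₃, hCv₃⟩ := hBC
  have hind : LinearIndependent F ![v₁, v₂] := by
    rw [LinearIndependent.pair_symm_iff, LinearIndependent.pair_iff' hv₂]
    rintro k rfl
    exact hirr ⟨k • v₂, hv₁, ⟨a, hAv₁⟩, hBv₁, hCv₂.smul k⟩
  have had : a ≠ d := by
    rintro rfl
    exact hirr ⟨v₃, hv₃, ⟨a, mulVec_eq_smul_of_linearIndependent hind hAv₁ hAv₂ v₃⟩, hBv₃, hCv₃⟩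
  intro htr
  rcases eigVec_or_eigVec_of_tr_commutatorElement_eq_two hind hAv₁ hAv₂ had htr with hBCv₁ | hBCv₂
  · exact hirr ⟨v₁, hv₁, ⟨a, hAv₁⟩, hBv₁, by simpa using hBv₁.inv.mul hBCv₁⟩
  · exact hirr ⟨v₂, hv₂, ⟨d, hAv₂⟩, by simpa using hBCv₂.mul hCv₂.inv, hCv₂⟩

theorem pairwise_reducible_irreducible_triple
    {F : Type*} [Field F] [IsAlgClosed F] (A B C : SL2 F)
    (hirr : ¬ ∃ v : Fin 2 → F, v ≠ 0 ∧ eigVec A v ∧ eigVec B v ∧ eigVec C v)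
    (hAB : HasCommonEigenvector A B)
    (hAC : HasCommonEigenvector A C)
    (hBC : HasCommonEigenvector B C) :
    tr (A * (B * C) * A⁻¹ * (B * C)⁻¹) ≠ 2 :=
  pairwise_reducible_irreducible_triple_general A B C hirr hAB hAC hBC
end

section
/- An n-tuple (A₁,…,Aₙ) of matrices in SL(2,F) over an algebraically closed field F has a common invariant 1-dimensional subspace of F² if and only if tr([Aᵢ,Aⱼ]) = 2 for all i < j and tr([Aᵢ, AⱼAₖ]) = 2 for all i < j < k, where [X,Y] = XYX⁻¹Y⁻¹. -/
open Matrix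

/-!
Both sides are invariant under simultaneous conjugation. If `A` is upper triangular, with
second eigenvector `y = (A 0 1, A 1 1 - A 0 0)`, then `tr ⁅A, B⁆ - 2` is the product of
`B 1 0` and `y 0 * (B y) 1 - y 1 * (B y) 0`, the obstructions to `e₁` and to `y` being
eigenvectors of `B`. This gives the forward direction at once. Conversely, conjugate the first
non-central `Aᵢ₀` to upper triangular form: every `Aₘ` then fixes the line of `e₁` or that of
`y`. If neither line is common, some `Aⱼ` fixes only the first and some `Aₖ` only the second,
both later than `i₀`; but then neither `AⱼAₖ` nor `AₖAⱼ` fixes either line, contradicting the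
condition on the triple `i₀ < j, k`.
-/

open scoped commutatorElement

lemma forall_mem_or_forall_mem_of_mul {G ι : Type*} [Group G] [LinearOrder ι] {H K : Subgroup G}
    {g : ι → G} (hmem : ∀ m, g m ∈ H ∨ g m ∈ K)
    (hmul : ∀ j k, j < k → g j ∉ H ⊓ K → g k ∉ H ⊓ K → g j * g k ∈ H ∨ g j * g k ∈ K) :
    (∀ m, g m ∈ H) ∨ ∀ m, g m ∈ K := by
  by_contra! h
  obtain ⟨⟨k, hkH⟩, ⟨j, hjK⟩⟩ := h
  have hkK := (hmem k).resolve_left hkH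
  have hjH := (hmem j).resolve_right hjK
  have hj : g j ∉ H ⊓ K := fun h => hjK h.2
  have hk : g k ∉ H ⊓ K := fun h => hkH h.1
  rcases lt_trichotomy j k with hjk | rfl | hkj
  · rcases hmul j k hjk hj hk with h | h
    · exact hkH ((H.mul_mem_cancel_left hjH).mp h)
    · exact hjK ((K.mul_mem_cancel_right hkK).mp h)
  · exact hjK hkK
  · rcases hmul k j hkj hk hj with h | h
    · exact hkH ((H.mul_mem_cancel_right hjH).mp h)
    · exact hjK ((K.mul_mem_cancel_left hkK).mp h)

lemma conj_mem_center_iff {G : Type*} [Group G] (P g : G) :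
    MulAut.conj P g ∈ Subgroup.center G ↔ g ∈ Subgroup.center G := by
  have hfix : ∀ Q, ∀ z ∈ Subgroup.center G, MulAut.conj Q z = z := fun Q z hz => by
    rw [MulAut.conj_apply, Subgroup.mem_center_iff.mp hz Q, mul_inv_cancel_right]
  refine ⟨fun h => ?_, fun h => (hfix P g h).symm ▸ h⟩
  rwa [show g = MulAut.conj P⁻¹ (MulAut.conj P g) by simp [mul_assoc], hfix _ _ h]

section SL2

variable {F : Type*} [Field F]

lemma eigVec_iff_exists_smul {A : SL2 F} {v : Fin 2 → F} :
    eigVec A v ↔ ∃ c : F, A • v = c • v :=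
  Iff.rfl

lemma eigVec_iff_cross {A : SL2 F} {v : Fin 2 → F} :
    eigVec A v ↔ v 0 * (A • v) 1 = v 1 * (A • v) 0 := by
  rw [eigVec_iff_exists_smul]
  constructor
  · rintro ⟨c, hc⟩
    simp only [hc, Pi.smul_apply, smul_eq_mul]
    ring
  · intro h
    rcases eq_or_ne v 0 with rfl | hv
    · exact ⟨0, by simp⟩
    by_cases h0 : v 0 = 0
    · have h1 : v 1 ≠ 0 := fun h1 => hv (by ext i; fin_cases i <;> assumption)
      refine ⟨(A • v) 1 / v 1, ?_⟩
      ext i; fin_cases i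
      · simp_all
      · simp [h1]
    · refine ⟨(A • v) 0 / v 0, ?_⟩
      ext i; fin_cases i
      · simp [h0]
      · simp only [Fin.mk_one, Pi.smul_apply, smul_eq_mul]
        field_simp
        linear_combination h

lemma eigVec_e1_iff {A : SL2 F} : eigVec A ![1, 0] ↔ A 1 0 = 0 := by
  simp [eigVec_iff_cross, Matrix.SpecialLinearGroup.smul_def, mulVec, dotProduct]

lemma exists_eigVec [IsAlgClosed F] (A : SL2 F) : ∃ v, v ≠ 0 ∧ eigVec A v := by
  obtain ⟨c, hc⟩ := Module.End.exists_eigenvalue (Matrix.toLin' (A : Matrix (Fin 2) (Fin 2) F))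
  obtain ⟨v, hv⟩ := hc.exists_hasEigenvector
  exact ⟨v, hv.2, c, by simpa using hv.apply_eq_smul⟩

def lineStabilizer (v : Fin 2 → F) : Subgroup (SL2 F) where
  carrier := {A | ∃ c : F, A • v = c • v}
  one_mem' := ⟨1, by rw [one_smul, one_smul]⟩
  mul_mem' := by
    rintro A B ⟨a, ha⟩ ⟨b, hb⟩
    exact ⟨b * a, by rw [mul_smul, hb, smul_comm, ha, smul_smul]⟩
  inv_mem' := by
    rintro A ⟨a, ha⟩
    refine ⟨a⁻¹, ?_⟩
    have hv : v = a • A⁻¹ • v := by rw [← smul_comm, ← ha, inv_smul_smul]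
    by_cases ha0 : a = 0
    · rw [hv, ha0, zero_smul, smul_zero, smul_zero]
    · conv_rhs => rw [hv, smul_smul, inv_mul_cancel₀ ha0, one_smul]

lemma center_le_lineStabilizer (v : Fin 2 → F) :
    Subgroup.center (SL2 F) ≤ lineStabilizer v := by
  intro A hA
  obtain ⟨r, -, hr⟩ := Matrix.SpecialLinearGroup.mem_center_iff.mp hA
  refine ⟨r, ?_⟩
  change (A : Matrix (Fin 2) (Fin 2) F) *ᵥ v = r • v
  ext i
  simp [← hr, mulVec_diagonal]

lemma tr_conj_s8 (P A : SL2 F) : tr (MulAut.conj P A) = tr A := by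
  rw [tr, tr, MulAut.conj_apply, Matrix.SpecialLinearGroup.coe_mul,
    Matrix.SpecialLinearGroup.coe_mul, trace_mul_comm, ← mul_assoc,
    ← Matrix.SpecialLinearGroup.coe_mul, inv_mul_cancel,
    Matrix.SpecialLinearGroup.coe_one, one_mul]

lemma eigVec_conj_iff {P A : SL2 F} {v : Fin 2 → F} :
    eigVec (MulAut.conj P A) (P • v) ↔ eigVec A v := by
  simp only [eigVec_iff_exists_smul, MulAut.conj_apply, mul_smul, inv_smul_smul, ← smul_comm P,
    smul_left_cancel_iff]

lemma exists_smul_e1_eq {u : Fin 2 → F} (hu : u ≠ 0) : ∃ P : SL2 F, P • ![1, 0] = u := by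
  obtain ⟨w, hw⟩ : ∃ w : Fin 2 → F, u 0 * w 1 - u 1 * w 0 = 1 := by
    by_cases h0 : u 0 = 0
    · have h1 : u 1 ≠ 0 := fun h1 => hu (by ext i; fin_cases i <;> assumption)
      exact ⟨![-(u 1)⁻¹, 0], by simp [h1]⟩
    · exact ⟨![0, (u 0)⁻¹], by simp [h0]⟩
  refine ⟨⟨!![u 0, w 0; u 1, w 1], by rw [det_fin_two_of]; linear_combination hw⟩, ?_⟩
  change !![u 0, w 0; u 1, w 1] *ᵥ ![1, 0] = u
  ext i; fin_cases i <;> simp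

lemma exists_conj_eigVec_e1_iff {u : Fin 2 → F} (hu : u ≠ 0) :
    ∃ P : SL2 F, ∀ A, eigVec (MulAut.conj P A) ![1, 0] ↔ eigVec A u := by
  obtain ⟨P, hP⟩ := exists_smul_e1_eq hu
  refine ⟨P⁻¹, fun A => ?_⟩
  rw [← eigVec_conj_iff (P := P⁻¹) (v := u), ← hP, inv_smul_smul]

/-- The image of `![0, 1]` under `A - A 0 0`. -/
def secondEigVec (A : SL2 F) : Fin 2 → F := ![A 0 1, A 1 1 - A 0 0]

lemma eigVec_secondEigVec {A : SL2 F} (hA : A 1 0 = 0) : eigVec A (secondEigVec A) :=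
  ⟨A 1 1, by
    ext i; fin_cases i <;>
      simp only [secondEigVec, mulVec, dotProduct, Fin.sum_univ_two, hA, cons_val_zero,
        cons_val_one, cons_val_fin_one, Pi.smul_apply, smul_eq_mul, Fin.isValue, Fin.zero_eta,
        Fin.mk_one] <;>
      ring⟩

lemma secondEigVec_ne_zero {A : SL2 F} (hA : A 1 0 = 0) (hc : A ∉ Subgroup.center (SL2 F)) :
    secondEigVec A ≠ 0 := by
  intro h0
  have h01 : A 0 1 = 0 := congrFun h0 0
  have h11 : A 1 1 = A 0 0 := sub_eq_zero.mp (congrFun h0 1)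
  have hdet := A.2
  rw [det_fin_two] at hdet
  refine hc (Matrix.SpecialLinearGroup.mem_center_iff.mpr ⟨A 0 0, ?_, ?_⟩)
  · simp only [Fintype.card_fin]
    linear_combination hdet - A 0 0 * h11 + A 0 1 * hA
  · ext i j; fin_cases i <;> fin_cases j <;> simp [h01, h11, hA]

lemma tr_commutator_sub_two {A : SL2 F} (B : SL2 F) (hA : A 1 0 = 0) :
    tr ⁅A, B⁆ - 2 = B 1 0 * (secondEigVec A 0 * (B • secondEigVec A) 1
      - secondEigVec A 1 * (B • secondEigVec A) 0) := by
  have dA := A.2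
  have dB := B.2
  rw [det_fin_two, hA, mul_zero, sub_zero] at dA
  rw [det_fin_two] at dB
  simp only [tr, commutatorElement_def, Matrix.SpecialLinearGroup.coe_mul,
    Matrix.SpecialLinearGroup.coe_inv, adjugate_fin_two, hA, neg_zero, trace_fin_two, mul_apply,
    Fin.sum_univ_two, of_apply, cons_val', cons_val_fin_one, cons_val_zero, cons_val_one, mul_zero,
    add_zero, mul_neg, zero_mul, zero_add, secondEigVec, Matrix.SpecialLinearGroup.smul_def,
    smul_eq_mulVec, mulVec, dotProduct, Fin.isValue]
  linear_combination 2 * A 0 0 * A 1 1 * dB + 2 * dA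

lemma tr_commutator_eq_two {A B : SL2 F} (hA : A 1 0 = 0) (hB : B 1 0 = 0) :
    tr ⁅A, B⁆ = 2 := by
  have key := tr_commutator_sub_two B hA
  rwa [hB, zero_mul, sub_eq_zero] at key

lemma eigVec_e1_or_eigVec_secondEigVec {A B : SL2 F} (hA : A 1 0 = 0) (h : tr ⁅A, B⁆ = 2) :
    eigVec B ![1, 0] ∨ eigVec B (secondEigVec A) := by
  have key := tr_commutator_sub_two B hA
  rwa [h, sub_self, eq_comm, mul_eq_zero, sub_eq_zero, ← eigVec_iff_cross, ← eigVec_e1_iff]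
    at key

variable {ι : Type*}

def IsReducibleTuple (A : ι → SL2 F) : Prop :=
  ∃ v : Fin 2 → F, v ≠ 0 ∧ ∀ i, eigVec (A i) v

def TraceConditions [LinearOrder ι] (A : ι → SL2 F) : Prop :=
  (∀ i j, i < j → tr ⁅A i, A j⁆ = 2) ∧ ∀ i j k, i < j → j < k → tr ⁅A i, A j * A k⁆ = 2

lemma traceConditions_conj_iff [LinearOrder ι] (P : SL2 F) {A : ι → SL2 F} :
    TraceConditions (fun i => MulAut.conj P (A i)) ↔ TraceConditions A := by
  simp only [TraceConditions, ← map_mul, ← map_commutatorElement, tr_conj_s8]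

lemma IsReducibleTuple.of_conj {P : SL2 F} {A : ι → SL2 F}
    (h : IsReducibleTuple fun i => MulAut.conj P (A i)) : IsReducibleTuple A := by
  obtain ⟨v, hv, hA⟩ := h
  refine ⟨P⁻¹ • v, (smul_ne_zero_iff_ne _).mpr hv, fun i => (eigVec_conj_iff (P := P)).mp ?_⟩
  rw [smul_inv_smul]
  exact hA i

lemma traceConditions_of_forall_eigVec_e1 [LinearOrder ι] {A : ι → SL2 F}
    (h : ∀ i, eigVec (A i) ![1, 0]) : TraceConditions A := by
  have hA : ∀ i, A i 1 0 = 0 := fun i => eigVec_e1_iff.mp (h i)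
  exact ⟨fun i j _ => tr_commutator_eq_two (hA i) (hA j), fun i j k _ _ =>
    tr_commutator_eq_two (hA i) (eigVec_e1_iff.mp ((lineStabilizer _).mul_mem (h j) (h k)))⟩

lemma IsReducibleTuple.traceConditions [LinearOrder ι] {A : ι → SL2 F}
    (h : IsReducibleTuple A) : TraceConditions A := by
  obtain ⟨v, hv, hA⟩ := h
  obtain ⟨P, hP⟩ := exists_conj_eigVec_e1_iff hv
  exact (traceConditions_conj_iff P).mp
    (traceConditions_of_forall_eigVec_e1 fun i => (hP (A i)).mpr (hA i))

lemma isReducibleTuple_of_traceConditions_of_pivot [LinearOrder ι] {A : ι → SL2 F}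
    (hT : TraceConditions A) {i₀ : ι} (h10 : A i₀ 1 0 = 0)
    (hnc : A i₀ ∉ Subgroup.center (SL2 F))
    (hmin : ∀ m, A m ∉ Subgroup.center (SL2 F) → i₀ ≤ m) : IsReducibleTuple A := by
  set H := lineStabilizer (F := F) ![1, 0]
  set K := lineStabilizer (secondEigVec (A i₀))
  have hpivot : A i₀ ∈ H ⊓ K := ⟨eigVec_e1_iff.mpr h10, eigVec_secondEigVec h10⟩
  have hcenter : Subgroup.center (SL2 F) ≤ H ⊓ K :=
    le_inf (center_le_lineStabilizer _) (center_le_lineStabilizer _)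
  have hafter : ∀ m, A m ∉ H ⊓ K → i₀ < m := fun m hm =>
    lt_of_le_of_ne (hmin m fun h => hm (hcenter h)) (by rintro rfl; exact hm hpivot)
  have hsplit : ∀ B, tr ⁅A i₀, B⁆ = 2 → B ∈ H ∨ B ∈ K := fun B hB =>
    eigVec_e1_or_eigVec_secondEigVec h10 hB
  have hmem : ∀ m, A m ∈ H ∨ A m ∈ K := fun m => by
    by_cases hm : A m ∈ H ⊓ K
    · exact Or.inl hm.1
    · exact hsplit _ (hT.1 _ _ (hafter m hm))
  have hmul : ∀ j k, j < k → A j ∉ H ⊓ K → A k ∉ H ⊓ K → A j * A k ∈ H ∨ A j * A k ∈ K :=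
    fun j k hjk hj _ => hsplit _ (hT.2 _ _ _ (hafter j hj) hjk)
  rcases forall_mem_or_forall_mem_of_mul hmem hmul with h | h
  · exact ⟨_, by simp, h⟩
  · exact ⟨_, secondEigVec_ne_zero h10 hnc, h⟩

lemma TraceConditions.isReducibleTuple [IsAlgClosed F] [LinearOrder ι] [WellFoundedLT ι]
    {A : ι → SL2 F} (hT : TraceConditions A) : IsReducibleTuple A := by
  by_cases hcentral : ∀ i, A i ∈ Subgroup.center (SL2 F)
  · exact ⟨![1, 0], by simp, fun i => center_le_lineStabilizer _ (hcentral i)⟩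
  obtain ⟨i₀, hi₀, hmin⟩ := wellFounded_lt.has_min {m | A m ∉ Subgroup.center (SL2 F)}
    (not_forall.mp hcentral)
  obtain ⟨u, hu, hAu⟩ := exists_eigVec (A i₀)
  obtain ⟨P, hP⟩ := exists_conj_eigVec_e1_iff hu
  refine IsReducibleTuple.of_conj (P := P) (isReducibleTuple_of_traceConditions_of_pivot
    ((traceConditions_conj_iff P).mpr hT) (eigVec_e1_iff.mp ((hP _).mpr hAu))
    (mt (conj_mem_center_iff P _).mp hi₀)
    fun m hm => not_lt.mp (hmin m (mt (conj_mem_center_iff P _).mpr hm)))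

end SL2

theorem reducible_tuple_iff_trace_conditions
    {F : Type*} [Field F] [IsAlgClosed F] (n : ℕ) (A : Fin n → SL2 F) :
    (∃ v : Fin 2 → F, v ≠ 0 ∧ ∀ i, eigVec (A i) v) ↔
      ((∀ i j : Fin n, i < j →
          tr (A i * A j * (A i)⁻¹ * (A j)⁻¹) = 2) ∧
        (∀ i j k : Fin n, i < j → j < k →
          tr (A i * (A j * A k) * (A i)⁻¹ * (A j * A k)⁻¹) = 2)) :=
  ⟨IsReducibleTuple.traceConditions, TraceConditions.isReducibleTuple⟩
end

section
/- Let F be an algebraically closed field and let A₁, A₂ ∈ SL(2,F) have no common invariant 1-dimensional subspace. Then the pair (A₁,A₂) is determined up to simultaneous conjugation by the triple (tr(A₁), tr(A₂), tr(A₁A₂)): if (B₁,B₂) is another irreducible pair with the same trace triple, then there exists Q ∈ SL(2,F) with B₁ = QA₁Q⁻¹ and B₂ = QA₂Q⁻¹. -/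
open Matrix

/-!
Pick `l` with `l + l⁻¹ = tr A₁` and an eigenvector `v` of `A₁` for `l`. Irreducibility makes
`v, A₂ v` a basis of `F²`, and the Cayley–Hamilton identity `A + A⁻¹ = tr A • 1` on `SL₂`, applied
to `A₂` and to `A₁ A₂`, shows that the matrices of `A₁` and `A₂` in this basis depend only on `l`,
`tr A₂` and `tr (A₁ A₂)`. Rescaling the change of basis to determinant one (possible since `F` is
algebraically closed), both pairs are conjugate in `SL₂` to the same pair.
-/

open Polynomial in
theorem IsAlgClosed.exists_units_add_inv_eq {F : Type*} [Field F] [IsAlgClosed F] (x : F) :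
    ∃ l : Fˣ, (l : F) + (l : F)⁻¹ = x := by
  obtain ⟨l, hl⟩ := IsAlgClosed.exists_root (X ^ 2 - C x * X + 1 : F[X])
    (by rw [show (X ^ 2 - C x * X + 1 : F[X]).degree = 2 by compute_degree!]; decide)
  simp only [IsRoot, eval_add, eval_sub, eval_pow, eval_mul, eval_C, eval_X, eval_one] at hl
  have hl0 : l ≠ 0 := by rintro rfl; simp at hl
  refine ⟨Units.mk0 l hl0, ?_⟩
  rw [Units.val_mk0]
  field_simp
  linear_combination hl

theorem Matrix.mul_transpose_of_pair {m n R : Type*} [Fintype n] [Semiring R] (A : Matrix m n R)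
    (v w : n → R) : A * (of ![v, w])ᵀ = (of ![A *ᵥ v, A *ᵥ w])ᵀ := by
  ext i j; fin_cases j <;> rfl

theorem Matrix.transpose_of_pair_mul {n R : Type*} [CommSemiring R] (v w : n → R) (a b c d : R) :
    (of ![v, w])ᵀ * !![a, b; c, d] = (of ![a • v + c • w, b • v + d • w])ᵀ := by
  ext i j; fin_cases j <;> simp [mul_apply, Fin.sum_univ_two, mul_comm]

theorem Matrix.exists_semiconjBy_of_isUnit {n F : Type*} [Fintype n] [DecidableEq n] [Nonempty n]
    [Field F] [IsAlgClosed F] {P : Matrix n n F} (hP : IsUnit P)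
    {M₁ M₂ N₁ N₂ : SpecialLinearGroup n F} (h₁ : SemiconjBy P N₁ M₁) (h₂ : SemiconjBy P N₂ M₂) :
    ∃ Q : SpecialLinearGroup n F, SemiconjBy Q N₁ M₁ ∧ SemiconjBy Q N₂ M₂ := by
  have hdet : P.det ≠ 0 := ((isUnit_iff_isUnit_det P).1 hP).ne_zero
  obtain ⟨t, ht⟩ := IsAlgClosed.exists_pow_nat_eq P.det⁻¹ (Fintype.card_pos (α := n))
  refine ⟨⟨t • P, by rw [det_smul, ht, inv_mul_cancel₀ hdet]⟩, Subtype.ext ?_, Subtype.ext ?_⟩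
  · change t • P * N₁ = M₁ * (t • P)
    rw [smul_mul, mul_smul_comm, h₁.eq]
  · change t • P * N₂ = M₂ * (t • P)
    rw [smul_mul, mul_smul_comm, h₂.eq]

namespace SL2

variable {F : Type*} [Field F]

local notation:1024 "↑ₘ" A:1024 => ((A : SL2 F) : Matrix (Fin 2) (Fin 2) F)

theorem add_inv_eq_trace_smul_one (A : SL2 F) : ↑ₘA + ↑ₘ(A⁻¹) = tr A • 1 := by
  rw [Matrix.SpecialLinearGroup.coe_inv, adjugate_fin_two, tr, trace_fin_two]
  ext i j; fin_cases i <;> fin_cases j <;> simp [add_comm]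

theorem mulVec_add_inv_mulVec (A : SL2 F) (u : Fin 2 → F) :
    ↑ₘA *ᵥ u + ↑ₘ(A⁻¹) *ᵥ u = tr A • u := by
  rw [← add_mulVec, add_inv_eq_trace_smul_one, smul_mulVec, one_mulVec]

theorem inv_mulVec_mulVec (A : SL2 F) (u : Fin 2 → F) : ↑ₘ(A⁻¹) *ᵥ (↑ₘA *ᵥ u) = u := by
  rw [mulVec_mulVec, ← Matrix.SpecialLinearGroup.coe_mul, inv_mul_cancel,
    Matrix.SpecialLinearGroup.coe_one, one_mulVec]

theorem mulVec_mulVec_self (A : SL2 F) (u : Fin 2 → F) :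
    ↑ₘA *ᵥ (↑ₘA *ᵥ u) = tr A • (↑ₘA *ᵥ u) - u := by
  rw [← mulVec_add_inv_mulVec A (↑ₘA *ᵥ u), inv_mulVec_mulVec, add_sub_cancel_right]

theorem exists_mulVec_eq_smul (A : SL2 F) {l : Fˣ} (hl : tr A = l + (l : F)⁻¹) :
    ∃ v ≠ 0, ↑ₘA *ᵥ v = (l : F) • v := by
  have hdet : (↑ₘA - (l : F) • 1).det = 0 := by
    have hA := A.det_coe
    rw [tr, trace_fin_two] at hl
    rw [det_fin_two] at hA
    simp only [det_fin_two, Matrix.sub_apply, Matrix.smul_apply, one_apply_eq,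
      one_apply_ne zero_ne_one, one_apply_ne one_ne_zero, smul_eq_mul, mul_one, mul_zero, sub_zero]
    linear_combination hA - (l : F) * hl - mul_inv_cancel₀ l.ne_zero
  obtain ⟨v, hv0, hv⟩ := exists_mulVec_eq_zero_iff.2 hdet
  refine ⟨v, hv0, ?_⟩
  rwa [sub_mulVec, smul_mulVec, one_mulVec, sub_eq_zero] at hv

theorem mulVec_mul_mulVec_of_mulVec_eq_smul (A₁ A₂ : SL2 F) {l : Fˣ}
    (hl : tr A₁ = l + (l : F)⁻¹) {v : Fin 2 → F} (hv : ↑ₘA₁ *ᵥ v = (l : F) • v) :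
    ↑ₘA₁ *ᵥ (↑ₘA₂ *ᵥ v) = (tr (A₁ * A₂) - (l : F)⁻¹ * tr A₂) • v + (l : F)⁻¹ • (↑ₘA₂ *ᵥ v) := by
  have h₁ := mulVec_add_inv_mulVec A₁ v
  have h₂ := mulVec_add_inv_mulVec A₂ v
  have h₁₂ := mulVec_add_inv_mulVec (A₁ * A₂) v
  rw [_root_.mul_inv_rev, Matrix.SpecialLinearGroup.coe_mul, Matrix.SpecialLinearGroup.coe_mul,
    ← mulVec_mulVec, ← mulVec_mulVec] at h₁₂
  have hinv₁ : ↑ₘ(A₁⁻¹) *ᵥ v = (l : F)⁻¹ • v := by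
    rw [hv, hl] at h₁
    linear_combination (norm := module) h₁
  have hinv₂ : ↑ₘ(A₂⁻¹) *ᵥ v = tr A₂ • v - ↑ₘA₂ *ᵥ v := eq_sub_of_add_eq' h₂
  rw [hinv₁, mulVec_smul, hinv₂] at h₁₂
  linear_combination (norm := module) h₁₂

-- The matrices of `A₁` and `A₂` in the basis `v, A₂ v` of `F²`, where `A₁ v = l v`.
def normalFormFst (l : Fˣ) (y z : F) : SL2 F :=
  ⟨!![(l : F), z - (l : F)⁻¹ * y; 0, (l : F)⁻¹], by simp⟩

def normalFormSnd (y : F) : SL2 F :=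
  ⟨!![0, -1; 1, y], by simp⟩

theorem exists_semiconjBy_normalForm [IsAlgClosed F] {A₁ A₂ : SL2 F}
    (hA : ¬ HasCommonEigenvector A₁ A₂) {l : Fˣ} (hl : tr A₁ = l + (l : F)⁻¹) :
    ∃ Q : SL2 F, SemiconjBy Q (normalFormFst l (tr A₂) (tr (A₁ * A₂))) A₁ ∧
      SemiconjBy Q (normalFormSnd (tr A₂)) A₂ := by
  obtain ⟨v, hv0, hv⟩ := exists_mulVec_eq_smul A₁ hl
  have hind : LinearIndependent F ![v, ↑ₘA₂ *ᵥ v] :=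
    (LinearIndependent.pair_iff' hv0).2 fun a ha => hA ⟨v, hv0, ⟨l, hv⟩, ⟨a, ha.symm⟩⟩
  have hP : IsUnit (of ![v, ↑ₘA₂ *ᵥ v])ᵀ := linearIndependent_cols_iff_isUnit.1 hind
  refine Matrix.exists_semiconjBy_of_isUnit hP ?_ ?_
  · change _ * !![_, _; _, _] = _
    rw [transpose_of_pair_mul, mul_transpose_of_pair, hv,
      mulVec_mul_mulVec_of_mulVec_eq_smul A₁ A₂ hl hv]
    simp
  · change _ * !![_, _; _, _] = _
    rw [transpose_of_pair_mul, mul_transpose_of_pair, mulVec_mulVec_self]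
    simp [sub_eq_add_neg, add_comm]

end SL2

theorem irreducible_pair_determined_by_traces
    {F : Type*} [Field F] [IsAlgClosed F] (A₁ A₂ B₁ B₂ : SL2 F)
    (hA : ¬ HasCommonEigenvector A₁ A₂)
    (hB : ¬ HasCommonEigenvector B₁ B₂)
    (h1 : tr B₁ = tr A₁) (h2 : tr B₂ = tr A₂) (h12 : tr (B₁ * B₂) = tr (A₁ * A₂)) :
    ∃ Q : SL2 F, B₁ = Q * A₁ * Q⁻¹ ∧ B₂ = Q * A₂ * Q⁻¹ := by
  obtain ⟨l, hl⟩ := IsAlgClosed.exists_units_add_inv_eq (tr A₁)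
  obtain ⟨P, hP₁, hP₂⟩ := SL2.exists_semiconjBy_normalForm hA hl.symm
  obtain ⟨R, hR₁, hR₂⟩ := SL2.exists_semiconjBy_normalForm hB (h1.trans hl.symm)
  rw [h2, h12] at hR₁
  rw [h2] at hR₂
  exact ⟨R * P⁻¹, eq_mul_inv_of_mul_eq (hR₁.mul_left hP₁.inv_symm_left).symm,
    eq_mul_inv_of_mul_eq (hR₂.mul_left hP₂.inv_symm_left).symm⟩
end

section
/- Let F be an algebraically closed field of characteristic p ≥ 3 and let A ∈ SL(2,F) have finite order n. Then either n is coprime to p, or n = p, or n = 2p. Moreover: if n is coprime to p then A is diagonalisable; if n = p then A is conjugate in GL(2,F) to the matrix [[1,1],[0,1]]; if n = 2p then A is conjugate to [[-1,1],[0,-1]]. -/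
/-!
Over an algebraically closed field a 2 × 2 matrix has an eigenvector, so it is conjugate to an
upper triangular matrix and hence to a diagonal matrix or to a Jordan block `!![c, 1; 0, c]`.
Conjugation preserves order and determinant. A diagonal matrix of finite order has order prime
to `p` because Frobenius is injective on the reduced ring `Fin 2 → F`. A Jordan block of
determinant one has `c = ±1`, and its `k`-th power `!![c ^ k, k c ^ (k - 1); 0, c ^ k]` is
trivial exactly when `c ^ k = 1` and `p ∣ k`, which gives order `p` for `c = 1` and `2p` for
`c = -1`.
-/

open Matrix

section Monoid

variable {α : Type*} [Monoid α]

theorem IsConj.orderOf_eq {x y : α} (h : IsConj x y) : orderOf x = orderOf y :=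
  orderOf_eq_orderOf_iff.mpr fun k =>
    ⟨fun hx => isConj_one_right.mp (hx ▸ h.pow k),
      fun hy => isConj_one_left.mp (hy ▸ h.pow k)⟩

theorem isConj_of_mul_eq_mul {x y q : α} (hq : IsUnit q) (h : x * q = q * y) : IsConj x y :=
  IsConj.symm ⟨hq.unit, h.symm⟩

theorem orderOf_eq_of_forall_pow_eq_one_iff {x : α} {n : ℕ} (h : ∀ k, x ^ k = 1 ↔ n ∣ k) :
    orderOf x = n :=
  Nat.dvd_antisymm (orderOf_dvd_of_pow_eq_one ((h n).2 dvd_rfl)) ((h _).1 (pow_orderOf_eq_one x))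

end Monoid

theorem IsOfFinOrder.coprime_orderOf_of_expChar {R : Type*} [CommRing R] [IsReduced R] {p : ℕ}
    [ExpChar R p] (hp : p.Prime) {x : R} (hx : IsOfFinOrder x) : (orderOf x).Coprime p := by
  rw [Nat.coprime_comm, hp.coprime_iff_not_dvd]
  rintro ⟨m, hm⟩
  have hm0 : 0 < m := Nat.pos_of_mul_pos_left (hm ▸ hx.orderOf_pos)
  have hxm : x ^ m = 1 := by
    rw [← ExpChar.pow_prime_pow_mul_eq_one_iff p 1, pow_one, ← hm, pow_orderOf_eq_one]
  have := orderOf_le_of_pow_eq_one hm0 hxm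
  nlinarith [hp.two_le]

namespace Matrix

theorem IsConj.det_eq {n R : Type*} [Fintype n] [DecidableEq n] [CommRing R]
    {M N : Matrix n n R} (h : IsConj M N) : M.det = N.det :=
  isConj_iff_eq.mp ((detMonoidHom : Matrix n n R →* R).map_isConj h)

theorem orderOf_diagonal {n R : Type*} [Fintype n] [DecidableEq n] [Semiring R] (d : n → R) :
    orderOf (diagonal d) = orderOf d :=
  orderOf_injective (diagonalRingHom n R).toMonoidHom diagonal_injective d

theorem exists_isUnit_mul_mul_inv_eq_of_isConj {n R : Type*} [Fintype n] [DecidableEq n]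
    [CommRing R] {M N : Matrix n n R} (h : IsConj M N) :
    ∃ P : Matrix n n R, IsUnit P ∧ P * M * P⁻¹ = N := by
  obtain ⟨U, hU⟩ := h
  refine ⟨U, U.isUnit, ?_⟩
  rw [← coe_units_inv, hU.eq, Matrix.mul_assoc, Units.mul_inv, Matrix.mul_one]

variable {F : Type*} [Field F]

theorem exists_isUnit_det_mulVec_single_zero_eq {v : Fin 2 → F} (hv : v ≠ 0) :
    ∃ Q : Matrix (Fin 2) (Fin 2) F, IsUnit Q.det ∧ Q *ᵥ Pi.single 0 1 = v := by
  by_cases h0 : v 0 = 0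
  · have h1 : v 1 ≠ 0 := fun h1 => hv (funext fun i => by fin_cases i <;> assumption)
    refine ⟨!![v 0, 1; v 1, 0], by simpa [det_fin_two_of], ?_⟩
    ext i; fin_cases i <;> simp
  · refine ⟨!![v 0, 0; v 1, 1], by simpa [det_fin_two_of], ?_⟩
    ext i; fin_cases i <;> simp

theorem exists_isConj_upperTriangular [IsAlgClosed F] (M : Matrix (Fin 2) (Fin 2) F) :
    ∃ a b d : F, IsConj M !![a, b; 0, d] := by
  obtain ⟨c, hc⟩ := Module.End.exists_eigenvalue (toLin' M)
  obtain ⟨v, hv⟩ := hc.exists_hasEigenvector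
  have hMv : M *ᵥ v = c • v := by simpa using hv.apply_eq_smul
  obtain ⟨Q, hQ, hQv⟩ := exists_isUnit_det_mulVec_single_zero_eq hv.2
  set T := Q⁻¹ * M * Q
  have hT : T *ᵥ Pi.single 0 1 = c • Pi.single 0 1 := by
    calc T *ᵥ Pi.single 0 1 = Q⁻¹ *ᵥ (M *ᵥ v) := by
          simp only [T, ← hQv, mulVec_mulVec, Matrix.mul_assoc]
      _ = c • ((Q⁻¹ * Q) *ᵥ Pi.single 0 1) := by
          rw [hMv, mulVec_smul, ← hQv, mulVec_mulVec]
      _ = c • Pi.single 0 1 := by rw [nonsing_inv_mul _ hQ, one_mulVec]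
  refine ⟨T 0 0, T 0 1, T 1 1, isConj_of_mul_eq_mul ((isUnit_iff_isUnit_det Q).mpr hQ) ?_⟩
  have hT10 : T 1 0 = 0 := by simpa using congrFun hT 1
  rw [← hT10, ← eta_fin_two T, ← Matrix.mul_assoc, ← Matrix.mul_assoc, mul_nonsing_inv _ hQ,
    Matrix.one_mul]

theorem isConj_diagonal_or_jordanBlock_of_upperTriangular (a b d : F) :
    IsConj !![a, b; 0, d] (diagonal ![a, d]) ∨ IsConj !![a, b; 0, d] !![a, 1; 0, a] := by
  by_cases had : a = d
  · subst had
    by_cases hb : b = 0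
    · left
      rw [hb, diagonal_fin_two]
      exact IsConj.refl _
    · right
      refine isConj_of_mul_eq_mul (q := !![b, 0; 0, 1]) ?_ ?_
      · rw [isUnit_iff_isUnit_det, det_fin_two_of]; simpa using hb
      · simp [mul_comm]
  · left
    refine isConj_of_mul_eq_mul (q := !![1, b; 0, d - a]) ?_ ?_
    · rw [isUnit_iff_isUnit_det, det_fin_two_of]; simpa [sub_eq_zero] using Ne.symm had
    · rw [diagonal_fin_two]
      simpa using ⟨by ring, by ring⟩

theorem exists_isConj_diagonal_or_jordanBlock [IsAlgClosed F]
    (M : Matrix (Fin 2) (Fin 2) F) :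
    (∃ d₁ d₂ : F, IsConj M (diagonal ![d₁, d₂])) ∨ ∃ c : F, IsConj M !![c, 1; 0, c] := by
  obtain ⟨a, b, d, hM⟩ := exists_isConj_upperTriangular M
  rcases isConj_diagonal_or_jordanBlock_of_upperTriangular a b d with h | h
  · exact Or.inl ⟨a, d, hM.trans h⟩
  · exact Or.inr ⟨a, hM.trans h⟩

-- At `k = 0` the truncated `k - 1` is harmless: the entry is `0 * c ^ 0 = 0`.
theorem jordanBlock_pow (c : F) (k : ℕ) :
    !![c, 1; 0, c] ^ k = !![c ^ k, k * c ^ (k - 1); 0, c ^ k] := by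
  induction k with
  | zero => simp [one_fin_two]
  | succ k ih =>
    rw [pow_succ, ih, mul_fin_two]
    rcases k with _ | k
    · simp
    · simp only [pow_succ, Nat.cast_add, Nat.cast_one, add_tsub_cancel_right, mul_zero, add_zero,
        mul_one, zero_mul, zero_add, EmbeddingLike.apply_eq_iff_eq, vecCons_inj, and_true, true_and]
      ring

theorem jordanBlock_pow_eq_one_iff {c : F} (hc : c ≠ 0) (k : ℕ) :
    !![c, 1; 0, c] ^ k = 1 ↔ c ^ k = 1 ∧ (k : F) = 0 := by
  rw [jordanBlock_pow, one_fin_two]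
  simp only [EmbeddingLike.apply_eq_iff_eq, vecCons_inj, and_true, true_and, mul_eq_zero,
    pow_ne_zero _ hc, or_false]
  tauto

theorem orderOf_jordanBlock_one (p : ℕ) [CharP F p] : orderOf !![(1 : F), 1; 0, 1] = p :=
  orderOf_eq_of_forall_pow_eq_one_iff fun k => by
    rw [jordanBlock_pow_eq_one_iff one_ne_zero, CharP.cast_eq_zero_iff F p]
    simp

theorem orderOf_jordanBlock_neg_one {p : ℕ} [CharP F p] (hp : p.Prime) (hp2 : p ≠ 2) :
    orderOf !![(-1 : F), 1; 0, -1] = 2 * p :=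
  orderOf_eq_of_forall_pow_eq_one_iff fun k => by
    have hF : ringChar F ≠ 2 := ringChar.eq F p ▸ hp2
    rw [jordanBlock_pow_eq_one_iff (neg_ne_zero.mpr one_ne_zero),
      neg_one_pow_eq_one_iff_even (Ring.neg_one_ne_one_of_char_ne_two hF),
      CharP.cast_eq_zero_iff F p, even_iff_two_dvd]
    have h2p : Nat.Coprime 2 p := (Nat.coprime_primes Nat.prime_two hp).mpr hp2.symm
    exact ⟨fun ⟨h2k, hpk⟩ => h2p.mul_dvd_of_dvd_of_dvd h2k hpk,
      fun h => ⟨dvd_of_mul_right_dvd h, dvd_of_mul_left_dvd h⟩⟩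

end Matrix

theorem finite_order_normal_forms_odd_char
    {F : Type*} [Field F] [IsAlgClosed F] (p : ℕ) [CharP F p] (hp : p.Prime) (hp3 : 3 ≤ p)
    (A : SL2 F) (n : ℕ) (hn : orderOf A = n) (hnpos : 0 < n) :
    (Nat.Coprime n p ∨ n = p ∨ n = 2 * p) ∧
      (Nat.Coprime n p → ∃ P : Matrix (Fin 2) (Fin 2) F, IsUnit P ∧
        ∃ d₁ d₂ : F,
          P * (A : Matrix (Fin 2) (Fin 2) F) * P⁻¹ = Matrix.diagonal ![d₁, d₂]) ∧
      (n = p → ∃ P : Matrix (Fin 2) (Fin 2) F, IsUnit P ∧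
        P * (A : Matrix (Fin 2) (Fin 2) F) * P⁻¹ = !![1, 1; 0, 1]) ∧
      (n = 2 * p → ∃ P : Matrix (Fin 2) (Fin 2) F, IsUnit P ∧
        P * (A : Matrix (Fin 2) (Fin 2) F) * P⁻¹ = !![-1, 1; 0, -1]) := by
  have : Fact p.Prime := ⟨hp⟩
  have hM : orderOf (A : Matrix (Fin 2) (Fin 2) F) = n :=
    hn ▸ orderOf_injective _ SpecialLinearGroup.coeMonoidHom_injective A
  have not_coprime : ¬ p.Coprime p := by rw [Nat.coprime_self]; exact hp.one_lt.ne'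
  rcases exists_isConj_diagonal_or_jordanBlock (A : Matrix (Fin 2) (Fin 2) F) with
    ⟨d₁, d₂, hD⟩ | ⟨c, hJ⟩
  · rw [hD.orderOf_eq, orderOf_diagonal] at hM
    have hcop : n.Coprime p :=
      hM ▸ (orderOf_pos_iff.mp (hM ▸ hnpos)).coprime_orderOf_of_expChar hp
    obtain ⟨P, hP, hPA⟩ := exists_isUnit_mul_mul_inv_eq_of_isConj hD
    exact ⟨Or.inl hcop, fun _ => ⟨P, hP, d₁, d₂, hPA⟩,
      fun h => (not_coprime (h ▸ hcop)).elim,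
      fun h => (not_coprime (h ▸ hcop).coprime_mul_left).elim⟩
  · obtain ⟨P, hP, hPA⟩ := exists_isUnit_mul_mul_inv_eq_of_isConj hJ
    have hc : c * c = 1 := by simpa [A.2, det_fin_two_of] using hJ.det_eq.symm
    rw [hJ.orderOf_eq] at hM
    rcases mul_self_eq_one_iff.mp hc with rfl | rfl
    · rw [orderOf_jordanBlock_one p] at hM
      subst hM
      exact ⟨Or.inr (Or.inl rfl), fun h => (not_coprime h).elim, fun _ => ⟨P, hP, hPA⟩,
        fun h => by omega⟩
    · rw [orderOf_jordanBlock_neg_one hp (by omega)] at hM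
      subst hM
      exact ⟨Or.inr (Or.inr rfl), fun h => (not_coprime h.coprime_mul_left).elim,
        fun h => by omega, fun _ => ⟨P, hP, hPA⟩⟩
end

section
/- Let F be an algebraically closed field of characteristic 2 and let A ∈ SL(2,F) have finite order n. Then either n is odd or n = 2; if n is odd then A is diagonalisable, and if n = 2 then A is conjugate to [[1,1],[0,1]]. -/
/-!
Over a field of characteristic 2 the characteristic polynomial of `A ∈ SL(2, F)` is
`X² + tX + 1` with `t = tr A`. If `t = 0`, then `(A - 1)² = 0`, so `A` is either `1` or a
transvection, conjugate to `!![1, 1; 0, 1]` and of order 2. If `t ≠ 0`, the two roots `λ` and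
`t - λ` are distinct, so `A` is diagonalisable, and its order is that of its pair of
eigenvalues in `F × F`. That order is odd because `x² = 1` forces `(x - 1)² = 0`, i.e. `x = 1`.
-/

open Matrix

open Polynomial

theorem CharTwo.eq_one_of_sq_eq_one {R : Type*} [CommRing R] [IsReduced R] [CharP R 2]
    {x : R} (h : x ^ 2 = 1) : x = 1 :=
  frobenius_inj R 2 (by rw [frobenius_def, frobenius_def, h, one_pow])

theorem IsOfFinOrder.odd_orderOf {G : Type*} [Monoid G] (h : ∀ y : G, y ^ 2 = 1 → y = 1)
    {x : G} (hx : IsOfFinOrder x) : Odd (orderOf x) := by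
  obtain ⟨k, hk⟩ | hodd := Nat.even_or_odd (orderOf x)
  · have hpos := hx.orderOf_pos
    have hxk : x ^ k = 1 := h _ (by rw [← pow_mul, mul_two, ← hk, pow_orderOf_eq_one])
    have := orderOf_le_of_pow_eq_one (by omega) hxk
    omega
  · exact hodd

theorem Units.orderOf_conj {M : Type*} [Monoid M] (u : Mˣ) (x : M) :
    orderOf (↑u * x * ↑u⁻¹) = orderOf x := by
  refine orderOf_eq_orderOf_iff.mpr fun k => ?_
  rw [Units.conj_pow, Units.mul_inv_eq_one, u.isUnit.mul_eq_left]

namespace Matrix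

section Field

variable {n K : Type*} [Fintype n] [DecidableEq n] [Field K]

theorem exists_conj_eq_of_linearIndependent {A B : Matrix n n K} {b : n → n → K}
    (hb : LinearIndependent K b) (hA : ∀ j, A *ᵥ b j = ∑ i, B i j • b i) :
    ∃ P : Matrix n n K, IsUnit P ∧ P * A * P⁻¹ = B := by
  set M : Matrix n n K := (of b)ᵀ
  have hM : IsUnit M := linearIndependent_cols_iff_isUnit.mp hb
  have hAM : A * M = M * B := by
    ext i j
    simpa [M, mul_apply, mulVec, dotProduct, Finset.sum_apply, mul_comm] using congrFun (hA j) i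
  have hMdet : IsUnit M.det := (isUnit_iff_isUnit_det M).mp hM
  refine ⟨M⁻¹, isUnit_nonsing_inv_iff.mpr hM, ?_⟩
  rw [nonsing_inv_nonsing_inv M hMdet, Matrix.mul_assoc, hAM, nonsing_inv_mul_cancel_left _ _ hMdet]

theorem exists_conj_eq_diagonal_of_eigenvectors {A : Matrix n n K} {μ : n → K}
    (hμ : Function.Injective μ) {b : n → n → K} (hb0 : ∀ i, b i ≠ 0)
    (hb : ∀ i, A *ᵥ b i = μ i • b i) :
    ∃ P : Matrix n n K, IsUnit P ∧ P * A * P⁻¹ = diagonal μ := by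
  refine exists_conj_eq_of_linearIndependent
    (Module.End.eigenvectors_linearIndependent' (toLin' A) μ hμ b fun i =>
      ⟨Module.End.mem_eigenspace_iff.mpr (by simpa using hb i), hb0 i⟩) fun j => ?_
  simp [diagonal_apply, hb j]

theorem exists_mulVec_eq_smul_of_isRoot_charpoly (A : Matrix n n K) {x : K}
    (hx : A.charpoly.IsRoot x) : ∃ v ≠ 0, A *ᵥ v = x • v := by
  obtain ⟨v, hv0, hv⟩ := (exists_mulVec_eq_zero_iff (M := scalar n x - A)).mpr
    (by rwa [← eval_charpoly])
  refine ⟨v, hv0, ?_⟩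
  rw [sub_mulVec, sub_eq_zero] at hv
  simpa [scalar_apply, smul_mulVec] using hv.symm

theorem odd_orderOf_of_conj_eq_diagonal [CharP K 2] {A P : Matrix n n K} (hP : IsUnit P)
    {d : n → K} (h : P * A * P⁻¹ = diagonal d) (hA : IsOfFinOrder A) : Odd (orderOf A) := by
  obtain ⟨u, rfl⟩ := hP
  have hd : orderOf A = orderOf d := by
    rw [← coe_units_inv] at h
    rw [← Units.orderOf_conj u A, h]
    exact orderOf_injective (diagonalRingHom n K).toMonoidHom diagonal_injective d
  rw [hd]
  exact (orderOf_pos_iff.mp (hd ▸ hA.orderOf_pos)).odd_orderOf fun y hy => _root_.funext fun i =>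
    CharTwo.eq_one_of_sq_eq_one (by simpa using congrFun hy i)

end Field

theorem sub_one_mul_self_eq_zero_of_trace_eq_two {R : Type*} [CommRing R] [Nontrivial R]
    {A : Matrix (Fin 2) (Fin 2) R} (ht : A.trace = 2) (hd : A.det = 1) :
    (A - 1) * (A - 1) = 0 := by
  have hCH := A.aeval_self_charpoly
  simp only [charpoly_fin_two, ht, hd, map_add, map_sub, map_mul, map_pow, aeval_X, aeval_C,
    Algebra.algebraMap_eq_smul_one, one_smul, two_smul] at hCH
  rw [← hCH]
  noncomm_ring

section FinTwo

variable {K : Type*} [Field K]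

theorem exists_conj_one_add_eq_of_mul_self_eq_zero {N : Matrix (Fin 2) (Fin 2) K}
    (hNN : N * N = 0) (hN : N ≠ 0) :
    ∃ P : Matrix (Fin 2) (Fin 2) K, IsUnit P ∧ P * (1 + N) * P⁻¹ = !![1, 1; 0, 1] := by
  obtain ⟨u, hu⟩ : ∃ u, N *ᵥ u ≠ 0 := by
    by_contra! h
    exact hN (mulVec_injective (_root_.funext fun u => by simp [h u]))
  have hNNu : N *ᵥ (N *ᵥ u) = 0 := by rw [mulVec_mulVec, hNN, zero_mulVec]
  refine exists_conj_eq_of_linearIndependent (b := ![N *ᵥ u, u]) ?_ ?_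
  · refine LinearIndependent.pair_iff.mpr fun s t hst => ?_
    have ht : t = 0 := by
      have := congrArg (N *ᵥ ·) hst
      simp only [mulVec_add, mulVec_smul, hNNu, smul_zero, zero_add, mulVec_zero] at this
      exact (smul_eq_zero.mp this).resolve_right hu
    subst ht
    rw [zero_smul, add_zero] at hst
    exact ⟨(smul_eq_zero.mp hst).resolve_right hu, rfl⟩
  · refine Fin.forall_fin_two.mpr ⟨?_, ?_⟩
    · rw [cons_val_zero, add_mulVec, one_mulVec, hNNu]
      simp [Fin.sum_univ_two]
    · simp [Fin.sum_univ_two, add_mulVec, add_comm]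

theorem exists_conj_eq_diagonal_of_trace_ne_zero [IsAlgClosed K] [CharP K 2]
    {A : Matrix (Fin 2) (Fin 2) K} (ht : A.trace ≠ 0) :
    ∃ P : Matrix (Fin 2) (Fin 2) K, IsUnit P ∧ ∃ l m : K, P * A * P⁻¹ = diagonal ![l, m] := by
  obtain ⟨l, hl⟩ := IsAlgClosed.exists_root A.charpoly (by simp [charpoly_degree_eq_dim])
  have hm : A.charpoly.IsRoot (A.trace - l) := by
    simp only [IsRoot, charpoly_fin_two, eval_add, eval_sub, eval_mul, eval_pow, eval_C,
      eval_X] at hl ⊢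
    linear_combination hl
  have hlm : l ≠ A.trace - l := fun h =>
    ht (by linear_combination -h + l * CharTwo.two_eq_zero (R := K))
  obtain ⟨v, hv0, hv⟩ := exists_mulVec_eq_smul_of_isRoot_charpoly A hl
  obtain ⟨w, hw0, hw⟩ := exists_mulVec_eq_smul_of_isRoot_charpoly A hm
  obtain ⟨P, hP, hPA⟩ := exists_conj_eq_diagonal_of_eigenvectors (injective_pair_iff_ne.mpr hlm)
    (b := ![v, w]) (Fin.forall_fin_two.mpr ⟨hv0, hw0⟩) (Fin.forall_fin_two.mpr ⟨hv, hw⟩)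
  exact ⟨P, hP, _, _, hPA⟩

end FinTwo

end Matrix

theorem finite_order_normal_forms_char_two
    {F : Type*} [Field F] [IsAlgClosed F] [CharP F 2]
    (A : SL2 F) (n : ℕ) (hn : orderOf A = n) (hnpos : 0 < n) :
    (Odd n ∨ n = 2) ∧
      (Odd n → ∃ P : Matrix (Fin 2) (Fin 2) F, IsUnit P ∧
        ∃ d₁ d₂ : F,
          P * (A : Matrix (Fin 2) (Fin 2) F) * P⁻¹ = Matrix.diagonal ![d₁, d₂]) ∧
      (n = 2 → ∃ P : Matrix (Fin 2) (Fin 2) F, IsUnit P ∧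
        P * (A : Matrix (Fin 2) (Fin 2) F) * P⁻¹ = !![1, 1; 0, 1]) := by
  set M : Matrix (Fin 2) (Fin 2) F := (A : Matrix (Fin 2) (Fin 2) F)
  have hM : orderOf M = n :=
    hn ▸ orderOf_injective _ SpecialLinearGroup.coeMonoidHom_injective A
  by_cases ht : M.trace = 0
  · have hNN : (M - 1) * (M - 1) = 0 :=
      sub_one_mul_self_eq_zero_of_trace_eq_two (by rw [ht, CharTwo.two_eq_zero]) A.prop
    have hsq : M ^ 2 = 1 := by
      calc M ^ 2 = 1 + (M - 1 + (M - 1)) + (M - 1) * (M - 1) := by noncomm_ring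
        _ = 1 := by rw [hNN, CharTwo.add_self_eq_zero, add_zero, add_zero]
    rcases (Nat.dvd_prime Nat.prime_two).mp (hM ▸ orderOf_dvd_of_pow_eq_one hsq) with rfl | rfl
    · have hM1 : M = 1 := orderOf_eq_one_iff.mp hM
      exact ⟨Or.inl odd_one,
        fun _ => ⟨1, isUnit_one, 1, 1, by simp [hM1, diagonal_fin_two, one_fin_two]⟩, by omega⟩
    · have hN : M - 1 ≠ 0 := fun h => by simp [sub_eq_zero.mp h] at hM
      obtain ⟨P, hP, hPM⟩ := exists_conj_one_add_eq_of_mul_self_eq_zero hNN hN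
      exact ⟨Or.inr rfl, fun h => absurd h (by decide),
        fun _ => ⟨P, hP, by rwa [add_sub_cancel] at hPM⟩⟩
  · obtain ⟨P, hP, l, m, hPM⟩ := exists_conj_eq_diagonal_of_trace_ne_zero ht
    have hodd : Odd n :=
      hM ▸ odd_orderOf_of_conj_eq_diagonal hP hPM (orderOf_pos_iff.mp (hM ▸ hnpos))
    exact ⟨Or.inl hodd, fun _ => ⟨P, hP, l, m, hPM⟩, fun h => absurd hodd (by rw [h]; decide)⟩
end

section
/- Let F be an algebraically closed field of characteristic 2 and suppose ρ: Γ → SL(2,F) is an irreducible representation whose image is the subgroup of SL(2,F) generated by the matrices S = [[1,1],[0,1]] and T = [[y,0],[y+y⁻¹,y⁻¹]] for some y ∈ F with y ≠ 0 and y² ≠ 1. Then every element g of the image of ρ satisfies: either tr(g) = 0, or g and T have a common invariant 1-dimensional subspace of F². -/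
open Matrix

/-! In characteristic 2 the unipotent `S` swaps the lines `⟨e₂⟩` and `⟨e₁ + e₂⟩` of `F²`, while `T`
preserves each of them (with eigenvalues `y⁻¹` and `y`). Hence every element of the image stabilizes
this pair of lines: either it fixes `⟨e₂⟩`, which is also an eigenline of `T`, or it swaps the two
lines, and then its matrix in the basis `(e₂, e₁ + e₂)` is antidiagonal, so its trace vanishes. -/

open Pointwise MulAction

theorem MulAction.mem_stabilizer_pair_iff {G X : Type*} [Group G] [MulAction G X] {g : G}
    {x y : X} :
    g ∈ stabilizer G ({x, y} : Set X) ↔ (g • x = x ∧ g • y = y) ∨ (g • x = y ∧ g • y = x) := by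
  rw [mem_stabilizer_iff, Set.smul_set_insert, Set.smul_set_singleton]
  constructor
  · intro h
    have hx : g • x ∈ ({x, y} : Set X) := h ▸ Set.mem_insert _ _
    have hy : g • y ∈ ({x, y} : Set X) := h ▸ Set.mem_insert_of_mem _ rfl
    simp only [Set.mem_insert_iff, Set.mem_singleton_iff] at hx hy
    rcases hx with hx | hx <;> rcases hy with hy | hy
    · obtain rfl : y = x := smul_left_cancel g (hy.trans hx.symm)
      exact Or.inl ⟨hx, hx⟩
    · exact Or.inl ⟨hx, hy⟩
    · exact Or.inr ⟨hx, hy⟩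
    · obtain rfl : x = y := smul_left_cancel g (hx.trans hy.symm)
      exact Or.inl ⟨hx, hx⟩
  · rintro (⟨hx, hy⟩ | ⟨hx, hy⟩)
    · rw [hx, hy]
    · rw [hx, hy, Set.pair_comm]

theorem smul_span_singleton_eq_iff {G K M : Type*} [Group G] [DivisionRing K] [AddCommGroup M]
    [Module K M] [DistribMulAction G M] [SMulCommClass G K M] {g : G} {v w : M} (hv : v ≠ 0) :
    g • (K ∙ v) = K ∙ w ↔ ∃ c : K, g • v = c • w := by
  rw [Submodule.smul_span, Set.smul_set_singleton]
  constructor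
  · intro h
    obtain ⟨c, hc⟩ :=
      Submodule.mem_span_singleton.mp (h ▸ Submodule.mem_span_singleton_self (g • v))
    exact ⟨c, hc.symm⟩
  · rintro ⟨c, hc⟩
    have hc0 : c ≠ 0 := by
      rintro rfl
      exact hv ((smul_eq_zero_iff_eq g).mp (by simpa using hc))
    rw [hc, Submodule.span_singleton_smul_eq (IsUnit.mk0 c hc0)]

theorem Matrix.trace_eq_zero_of_mulVec_swap {R : Type*} [CommRing R]
    {A : Matrix (Fin 2) (Fin 2) R} {c d : R}
    (h₁ : A *ᵥ ![0, 1] = c • ![1, 1]) (h₂ : A *ᵥ ![1, 1] = d • ![0, 1]) : A.trace = 0 := by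
  have h₁₀ := congrFun h₁ 0
  have h₁₁ := congrFun h₁ 1
  have h₂₀ := congrFun h₂ 0
  simp only [mulVec, dotProduct, Fin.sum_univ_two, cons_val_zero, cons_val_one, cons_val_fin_one,
    mul_zero, mul_one, zero_add, Pi.smul_apply, smul_eq_mul] at h₁₀ h₁₁ h₂₀
  rw [Matrix.trace_fin_two]
  linear_combination h₂₀ - h₁₀ + h₁₁

theorem eigVec_zero_one_iff {F : Type*} [Field F] {A : SL2 F} :
    eigVec A ![0, 1] ↔ (A : Matrix (Fin 2) (Fin 2) F) 0 1 = 0 :=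
  ⟨fun ⟨c, h⟩ => by simpa using congrFun h 0,
    fun h => ⟨(A : Matrix (Fin 2) (Fin 2) F) 1 1, by ext i; fin_cases i <;> simp [h]⟩⟩

def linePair (F : Type*) [Field F] : Set (Submodule F (Fin 2 → F)) := {F ∙ ![0, 1], F ∙ ![1, 1]}

theorem unipotent_mem_stabilizer_linePair {F : Type*} [Field F] [CharP F 2] {S : SL2 F}
    (hS : (S : Matrix (Fin 2) (Fin 2) F) = !![1, 1; 0, 1]) :
    S ∈ stabilizer (SL2 F) (linePair F) := by
  rw [linePair, mem_stabilizer_pair_iff]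
  refine Or.inr ⟨(smul_span_singleton_eq_iff (by simp)).mpr ⟨1, ?_⟩,
    (smul_span_singleton_eq_iff (by simp)).mpr ⟨1, ?_⟩⟩ <;>
  · show (S : Matrix (Fin 2) (Fin 2) F) *ᵥ _ = _
    rw [hS]
    ext i; fin_cases i <;> simp [CharTwo.add_self_eq_zero]

theorem lowerTriangular_mem_stabilizer_linePair {F : Type*} [Field F] [CharP F 2] {y : F}
    {T : SL2 F} (hT : (T : Matrix (Fin 2) (Fin 2) F) = !![y, 0; y + y⁻¹, y⁻¹]) :
    T ∈ stabilizer (SL2 F) (linePair F) := by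
  rw [linePair, mem_stabilizer_pair_iff]
  refine Or.inl ⟨(smul_span_singleton_eq_iff (by simp)).mpr
    (eigVec_zero_one_iff.mpr (by simp [hT])), (smul_span_singleton_eq_iff (by simp)).mpr ⟨y, ?_⟩⟩
  show (T : Matrix (Fin 2) (Fin 2) F) *ᵥ _ = _
  rw [hT]
  ext i; fin_cases i <;> simp [add_assoc, CharTwo.add_self_eq_zero]

theorem dihedral_image_trace_zero_or_reducible_with_T_general
    {F : Type*} [Field F] [CharP F 2]
    {Γ : Type*} [Group Γ] (ρ : Γ →* SL2 F)
    (y : F)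
    (S T : SL2 F)
    (hS : (S : Matrix (Fin 2) (Fin 2) F) = !![1, 1; 0, 1])
    (hT : (T : Matrix (Fin 2) (Fin 2) F) = !![y, 0; y + y⁻¹, y⁻¹])
    (hrange : ρ.range = Subgroup.closure ({S, T} : Set (SL2 F))) :
    ∀ g : SL2 F, g ∈ ρ.range → tr g = 0 ∨ HasCommonEigenvector g T := by
  intro g hg
  have hstab : ρ.range ≤ stabilizer (SL2 F) (linePair F) := by
    rw [hrange, Subgroup.closure_le]
    rintro x (rfl | rfl)
    exacts [unipotent_mem_stabilizer_linePair hS, lowerTriangular_mem_stabilizer_linePair hT]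
  have he₂ : (![0, 1] : Fin 2 → F) ≠ 0 := by simp
  rcases mem_stabilizer_pair_iff.mp (hstab hg) with ⟨hfix, -⟩ | ⟨hswap₁, hswap₂⟩
  · exact Or.inr ⟨![0, 1], he₂, (smul_span_singleton_eq_iff he₂).mp hfix,
      eigVec_zero_one_iff.mpr (by simp [hT])⟩
  · obtain ⟨c, hc⟩ := (smul_span_singleton_eq_iff he₂).mp hswap₁
    obtain ⟨d, hd⟩ := (smul_span_singleton_eq_iff (by simp)).mp hswap₂
    exact Or.inl (Matrix.trace_eq_zero_of_mulVec_swap hc hd)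

theorem dihedral_image_trace_zero_or_reducible_with_T
    {F : Type*} [Field F] [IsAlgClosed F] [CharP F 2]
    {Γ : Type*} [Group Γ] (ρ : Γ →* SL2 F)
    (hirr : ¬ ∃ v : Fin 2 → F, v ≠ 0 ∧ ∀ g : Γ, eigVec (ρ g) v)
    (y : F) (hy : y ≠ 0) (hy2 : y ^ 2 ≠ 1)
    (S T : SL2 F)
    (hS : (S : Matrix (Fin 2) (Fin 2) F) = !![1, 1; 0, 1])
    (hT : (T : Matrix (Fin 2) (Fin 2) F) = !![y, 0; y + y⁻¹, y⁻¹])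
    (hrange : ρ.range = Subgroup.closure ({S, T} : Set (SL2 F))) :
    ∀ g : SL2 F, g ∈ ρ.range → tr g = 0 ∨ HasCommonEigenvector g T :=
  dihedral_image_trace_zero_or_reducible_with_T_general ρ y S T hS hT hrange
end

section
/- Let F be a field and let A = [[a,1],[0,a⁻¹]], B = [[b,0],[u,b⁻¹]] ∈ SL(2,F) with u ≠ 0 and a, b nonzero. Then A and B have a common invariant 1-dimensional subspace of F² if and only if u = −(a − a⁻¹)(b − b⁻¹), and in that case u ≠ 0 forces (a² − 1)(b² − 1) ≠ 0. -/
open Matrix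

/-! Since the corner entry `1` of `A` and the entry `u` of `B` are nonzero, neither coordinate
axis is a common eigenline, so a common eigenvector `(x, y)` has `x y ≠ 0`. Then `A` forces
eigenvalue `a⁻¹` and `y = (a⁻¹ - a) x`, while `B` forces eigenvalue `b` and
`u x = (b - b⁻¹) y`; eliminating `y` gives the criterion. Conversely `(1, a⁻¹ - a)` is then a
common eigenvector. Finally `a² = 1` would force `a = a⁻¹` and hence `u = 0`; likewise for `b`. -/

theorem Matrix.fin_two_mulVec_eq_smul_iff {R : Type*} [CommRing R] (p q s r c : R)
    (v : Fin 2 → R) :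
    !![p, q; s, r] *ᵥ v = c • v ↔ p * v 0 + q * v 1 = c * v 0 ∧ s * v 0 + r * v 1 = c * v 1 := by
  simp [funext_iff, Fin.forall_fin_two, dotProduct, Fin.sum_univ_two]

theorem sq_sub_one_ne_zero_of_sub_inv_ne_zero {K : Type*} [DivisionRing K] {a : K}
    (h : a - a⁻¹ ≠ 0) : a ^ 2 - 1 ≠ 0 := fun h₁ ↦
  h (sub_eq_zero.mpr (inv_eq_of_mul_eq_one_right (by rw [← sq, sub_eq_zero.mp h₁])).symm)

section Eigenvectors

variable {F : Type*} [Field F] {A : SL2 F} {p q r : F} {v : Fin 2 → F}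

theorem eigVec_iff_of_coe_eq_upper (hA : (A : Matrix (Fin 2) (Fin 2) F) = !![p, q; 0, r])
    (hv : v 1 ≠ 0) : eigVec A v ↔ q * v 1 = (r - p) * v 0 := by
  simp only [eigVec, hA, fin_two_mulVec_eq_smul_iff, zero_mul, zero_add]
  constructor
  · rintro ⟨c, h0, h1⟩
    obtain rfl : c = r := (mul_right_cancel₀ hv h1).symm
    linear_combination h0
  · exact fun h ↦ ⟨r, by linear_combination h, rfl⟩

theorem eigVec_iff_of_coe_eq_lower (hA : (A : Matrix (Fin 2) (Fin 2) F) = !![p, 0; q, r])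
    (hv : v 0 ≠ 0) : eigVec A v ↔ q * v 0 = (p - r) * v 1 := by
  simp only [eigVec, hA, fin_two_mulVec_eq_smul_iff, zero_mul, add_zero]
  constructor
  · rintro ⟨c, h0, h1⟩
    obtain rfl : c = p := (mul_right_cancel₀ hv h0).symm
    linear_combination h1
  · exact fun h ↦ ⟨p, rfl, by linear_combination h⟩

theorem fst_ne_zero_of_eigVec_upper (hA : (A : Matrix (Fin 2) (Fin 2) F) = !![p, q; 0, r])
    (hq : q ≠ 0) (hv : v ≠ 0) (h : eigVec A v) : v 0 ≠ 0 := by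
  intro h0
  have h1 : v 1 ≠ 0 := fun h1 ↦ hv (funext fun i ↦ by fin_cases i <;> assumption)
  have := (eigVec_iff_of_coe_eq_upper hA h1).mp h
  rw [h0, mul_zero] at this
  exact mul_ne_zero hq h1 this

theorem snd_ne_zero_of_eigVec_lower (hA : (A : Matrix (Fin 2) (Fin 2) F) = !![p, 0; q, r])
    (hq : q ≠ 0) (hv : v ≠ 0) (h : eigVec A v) : v 1 ≠ 0 := by
  intro h1
  have h0 : v 0 ≠ 0 := fun h0 ↦ hv (funext fun i ↦ by fin_cases i <;> assumption)
  have := (eigVec_iff_of_coe_eq_lower hA h0).mp h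
  rw [h1, mul_zero] at this
  exact mul_ne_zero hq h0 this

end Eigenvectors

theorem reducible_pair_normal_form_criterion_general
    {F : Type*} [Field F] (a b u : F) (hu : u ≠ 0)
    (A B : SL2 F)
    (hA : (A : Matrix (Fin 2) (Fin 2) F) = !![a, 1; 0, a⁻¹])
    (hB : (B : Matrix (Fin 2) (Fin 2) F) = !![b, 0; u, b⁻¹]) :
    (HasCommonEigenvector A B ↔ u = -(a - a⁻¹) * (b - b⁻¹)) ∧
      (u = -(a - a⁻¹) * (b - b⁻¹) → (a ^ 2 - 1) * (b ^ 2 - 1) ≠ 0) := by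
  have factors_ne_zero (h : u = -(a - a⁻¹) * (b - b⁻¹)) : a - a⁻¹ ≠ 0 ∧ b - b⁻¹ ≠ 0 := by
    rw [h, neg_mul, neg_ne_zero] at hu
    exact mul_ne_zero_iff.mp hu
  refine ⟨⟨?_, fun h ↦ ?_⟩, fun h ↦ ?_⟩
  · rintro ⟨v, hv, hAv, hBv⟩
    have hx := fst_ne_zero_of_eigVec_upper hA one_ne_zero hv hAv
    have hy := snd_ne_zero_of_eigVec_lower hB hu hv hBv
    have hyx := (eigVec_iff_of_coe_eq_upper hA hy).mp hAv
    have hxy := (eigVec_iff_of_coe_eq_lower hB hx).mp hBv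
    refine mul_right_cancel₀ hx ?_
    linear_combination hxy + (b - b⁻¹) * hyx
  · have ha' : a⁻¹ - a ≠ 0 := by
      rw [← neg_sub]; exact neg_ne_zero.mpr (factors_ne_zero h).1
    refine ⟨![1, a⁻¹ - a], fun h0 ↦ one_ne_zero (congrFun h0 0), ?_, ?_⟩
    · exact (eigVec_iff_of_coe_eq_upper hA ha').mpr (by simp)
    · exact (eigVec_iff_of_coe_eq_lower hB one_ne_zero).mpr (by simp only [cons_val_zero, cons_val_one, h]; ring)
  · obtain ⟨ha', hb'⟩ := factors_ne_zero h
    exact mul_ne_zero (sq_sub_one_ne_zero_of_sub_inv_ne_zero ha')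
      (sq_sub_one_ne_zero_of_sub_inv_ne_zero hb')

theorem reducible_pair_normal_form_criterion
    {F : Type*} [Field F] (a b u : F) (ha : a ≠ 0) (hb : b ≠ 0) (hu : u ≠ 0)
    (A B : SL2 F)
    (hA : (A : Matrix (Fin 2) (Fin 2) F) = !![a, 1; 0, a⁻¹])
    (hB : (B : Matrix (Fin 2) (Fin 2) F) = !![b, 0; u, b⁻¹]) :
    (HasCommonEigenvector A B ↔ u = -(a - a⁻¹) * (b - b⁻¹)) ∧
      (u = -(a - a⁻¹) * (b - b⁻¹) → (a ^ 2 - 1) * (b ^ 2 - 1) ≠ 0) :=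
  reducible_pair_normal_form_criterion_general a b u hu A B hA hB
end
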